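/- arXiv:1606.08333 — 2 statements merged into one kernel-verified Lean document; each statement's English description precedes it below -/
import Mathlib

section
/- The single-agent formula p ∨ □p is a non-trivially believable true lie on KD45: (i) (¬(p ∨ □p) ∧ ◇(p ∨ □p)) → [p ∨ □p](p ∨ □p) is valid on the class KD45, and (ii) (¬(p ∨ □p) ∧ ◇(p ∨ □p)) ∧ [p ∨ □p](p ∨ □p) is satisfiable on the class KD45. -/
inductive Form (A : Type) : Type
  | atom : ℕ → Form A
  | neg  : Form A → Form A
  | conj : Form A → Form A → Form A
  | box  : A → Form A → Form A
  | ann  : Form A → Form A → Form A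
  deriving DecidableEq

namespace Form

/-- ◇_a φ := ¬□_a¬φ -/
def dia {A : Type} (a : A) (φ : Form A) : Form A := .neg (.box a (.neg φ))

/-- φ → ψ := ¬(φ ∧ ¬ψ) -/
def imp {A : Type} (φ ψ : Form A) : Form A := .neg (.conj φ (.neg ψ))

/-- φ ∨ ψ := ¬(¬φ ∧ ¬ψ) -/
def or {A : Type} (φ ψ : Form A) : Form A := .neg (.conj (.neg φ) (.neg ψ))

/-- ⊥ := p ∧ ¬p -/
def bot {A : Type} : Form A := .conj (.atom 0) (.neg (.atom 0))

def top {A : Type} : Form A := .neg bot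

def iff {A : Type} (φ ψ : Form A) : Form A := .conj (imp φ ψ) (imp ψ φ)

end Form

/-- A Kripke model over agents `A` with state set `S`. -/
structure Model (A S : Type) where
  R : A → S → S → Prop
  V : ℕ → S → Prop

/-- Arrow elimination: keep only arrows pointing to states satisfying `P`. -/
def Model.restrict {A S : Type} (M : Model A S) (P : S → Prop) : Model A S :=
  ⟨fun a s t => M.R a s t ∧ P t, M.V⟩

/-- Satisfaction, with believed announcements interpreted by arrow elimination. -/
def Sat {A S : Type} : Model A S → Form A → S → Prop
  | M, .atom n, s => M.V n s
  | M, .neg φ, s => ¬ Sat M φ s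
  | M, .conj φ ψ, s => Sat M φ s ∧ Sat M ψ s
  | M, .box a φ, s => ∀ t : S, M.R a s t → Sat M φ t
  | M, .ann φ ψ, s => Sat (M.restrict (fun t => Sat M φ t)) ψ s

/-- K45: every accessibility relation is transitive and euclidean. -/
def isK45 {A S : Type} (M : Model A S) : Prop :=
  ∀ a : A, (∀ x y z : S, M.R a x y → M.R a y z → M.R a x z) ∧
    (∀ x y z : S, M.R a x y → M.R a x z → M.R a y z)

/-- KD45: every accessibility relation is transitive, euclidean and serial. -/
def isKD45 {A S : Type} (M : Model A S) : Prop :=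
  ∀ a : A, (∀ x y z : S, M.R a x y → M.R a y z → M.R a x z) ∧
    (∀ x y z : S, M.R a x y → M.R a x z → M.R a y z) ∧
    (∀ x : S, ∃ y : S, M.R a x y)

/-- The single-agent formula p ∨ □p. -/
def pOrBoxP : Form Unit := Form.or (Form.atom 0) (Form.box () (Form.atom 0))

/-!
On a euclidean frame, every successor `t` of `s` sees itself. So if `t` survives the announcement
of `p ∨ □p` because `□p` holds at `t`, then `p` holds at `t`: after the announcement all remaining
successors of `s` satisfy `p`, and `p ∨ □p` is true at `s` whatever was the case before.
Hence `[p ∨ □p](p ∨ □p)` is valid on KD45, which gives (i); for (ii), take the two-state universal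
model in which `p` holds at exactly one state and evaluate at the other.
-/

lemma sat_imp {A S : Type} (M : Model A S) (φ ψ : Form A) (s : S) :
    Sat M (Form.imp φ ψ) s ↔ (Sat M φ s → Sat M ψ s) := by
  simp [Form.imp, Sat]

lemma sat_pOrBoxP {S : Type} (M : Model Unit S) (s : S) :
    Sat M pOrBoxP s ↔ M.V 0 s ∨ ∀ t, M.R () s t → M.V 0 t := by
  simp [pOrBoxP, Form.or, Sat, or_iff_not_imp_left]

lemma sat_ann_pOrBoxP_of_euclidean {S : Type} (M : Model Unit S)
    (heuc : ∀ x y z : S, M.R () x y → M.R () x z → M.R () y z) (s : S) :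
    Sat M (Form.ann pOrBoxP pOrBoxP) s := by
  change Sat (M.restrict _) pOrBoxP s
  rw [sat_pOrBoxP]
  refine or_iff_not_imp_left.mpr fun _ t ⟨hst, ht⟩ => ?_
  rcases (sat_pOrBoxP M t).mp ht with hp | hbox
  · exact hp
  · exact hbox t (heuc s t t hst hst)

def universalBoolModel : Model Unit Bool :=
  ⟨fun _ _ _ => True, fun _ s => s = true⟩

lemma isKD45_universalBoolModel : isKD45 universalBoolModel :=
  fun _ => ⟨fun _ _ _ _ _ => trivial, fun _ _ _ _ _ => trivial, fun x => ⟨x, trivial⟩⟩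

lemma not_sat_universalBoolModel_pOrBoxP_false : ¬ Sat universalBoolModel pOrBoxP false := by
  simp [sat_pOrBoxP, universalBoolModel]

lemma sat_universalBoolModel_dia_pOrBoxP (s : Bool) :
    Sat universalBoolModel (Form.dia () pOrBoxP) s := by
  change ¬ ∀ t, True → ¬ Sat universalBoolModel pOrBoxP t
  exact fun h => h true trivial ((sat_pOrBoxP _ _).mpr (Or.inl rfl))

/-- p ∨ □p is a non-trivially believable true lie on KD45:
(i) (¬(p ∨ □p) ∧ ◇(p ∨ □p)) → [p ∨ □p](p ∨ □p) is valid on KD45, and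
(ii) (¬(p ∨ □p) ∧ ◇(p ∨ □p)) ∧ [p ∨ □p](p ∨ □p) is satisfiable on KD45. -/
theorem p_or_box_p_nontrivially_believable_true_lie_on_KD45 :
    (∀ (S : Type) (M : Model Unit S) (s : S), isKD45 M →
      Sat M (Form.imp (Form.conj (Form.neg pOrBoxP) (Form.dia () pOrBoxP))
        (Form.ann pOrBoxP pOrBoxP)) s) ∧
    (∃ (S : Type) (M : Model Unit S) (s : S), isKD45 M ∧
      Sat M (Form.conj (Form.conj (Form.neg pOrBoxP) (Form.dia () pOrBoxP))
        (Form.ann pOrBoxP pOrBoxP)) s) := by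
  refine ⟨fun S M s hKD45 => ?_, Bool, universalBoolModel, false, isKD45_universalBoolModel, ?_⟩
  · exact (sat_imp _ _ _ _).mpr fun _ => sat_ann_pOrBoxP_of_euclidean M (hKD45 ()).2.1 s
  · exact ⟨⟨not_sat_universalBoolModel_pOrBoxP_false, sat_universalBoolModel_dia_pOrBoxP false⟩,
      sat_ann_pOrBoxP_of_euclidean _ (fun _ _ _ _ _ => trivial) false⟩
end

section
/- The single-agent formula p ∧ □p is not a believable true lie on KD45: the formula (¬(p ∧ □p) ∧ ◇(p ∧ □p)) ∧ [p ∧ □p]¬(p ∧ □p) is satisfiable on the class KD45, so (¬(p ∧ □p) ∧ ◇(p ∧ □p)) → [p ∧ □p](p ∧ □p) is not valid on KD45. -/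
/-- The single-agent formula p ∧ □p. -/
def pAndBoxP : Form Unit := Form.conj (Form.atom 0) (Form.box () (Form.atom 0))

/- Announcements only delete arrows and never change the valuation, so at a state where
`p` is false, `p ∧ □p` stays false after any announcement. It therefore suffices to find a KD45
state refuting `p` that considers some `p ∧ □p`-state possible: take two states, `p` true only at
`true`, and let every state see exactly `true`. -/

section Satisfaction

variable {A S : Type} {M : Model A S} {s : S}

theorem sat_dia {a : A} {φ : Form A} : Sat M (.dia a φ) s ↔ ∃ t, M.R a s t ∧ Sat M φ t := by
  simp only [Form.dia, Sat, not_forall, not_not, exists_prop]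

theorem sat_ann_atom {φ : Form A} {n : ℕ} : Sat M (.ann φ (.atom n)) s ↔ M.V n s :=
  Iff.rfl

theorem sat_conj_ann_neg_iff_not_sat_imp_ann {φ ψ χ : Form A} :
    Sat M (.conj φ (.ann ψ (.neg χ))) s ↔ ¬ Sat M (φ.imp (.ann ψ χ)) s :=
  not_not.symm

end Satisfaction

theorem sat_pAndBoxP {S : Type} {M : Model Unit S} {s : S} :
    Sat M pAndBoxP s ↔ M.V 0 s ∧ ∀ t, M.R () s t → M.V 0 t :=
  Iff.rfl

theorem sat_ann_neg_pAndBoxP_of_not_atom {S : Type} {M : Model Unit S} {s : S} {φ : Form Unit}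
    (hs : ¬ M.V 0 s) : Sat M (.ann φ (.neg pAndBoxP)) s :=
  fun h => hs (sat_ann_atom.mp h.1)

theorem isKD45_of_forall_exists {A S : Type} {P : A → S → Prop} (hP : ∀ a, ∃ t, P a t)
    (V : ℕ → S → Prop) : isKD45 (⟨fun a _ t => P a t, V⟩ : Model A S) :=
  fun a => ⟨fun _ _ _ _ h => h, fun _ _ _ _ h => h, fun _ => hP a⟩

def believeTrue : Model Unit Bool := ⟨fun _ _ t => t = true, fun _ s => s = true⟩

theorem isKD45_believeTrue : isKD45 believeTrue :=
  isKD45_of_forall_exists (P := fun _ t => t = true) (fun _ => ⟨true, rfl⟩) believeTrue.V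

theorem sat_believeTrue_false :
    Sat believeTrue (.conj (.conj (.neg pAndBoxP) (.dia () pAndBoxP))
      (.ann pAndBoxP (.neg pAndBoxP))) false := by
  have hp : ¬ believeTrue.V 0 false := Bool.false_ne_true
  have htrue : Sat believeTrue pAndBoxP true := sat_pAndBoxP.mpr ⟨rfl, fun t ht => ht⟩
  exact ⟨⟨fun h => hp (sat_pAndBoxP.mp h).1, sat_dia.mpr ⟨true, rfl, htrue⟩⟩,
    sat_ann_neg_pAndBoxP_of_not_atom hp⟩

/-- p ∧ □p is not a believable true lie on KD45:
(¬(p ∧ □p) ∧ ◇(p ∧ □p)) ∧ [p ∧ □p]¬(p ∧ □p) is satisfiable on KD45, so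
(¬(p ∧ □p) ∧ ◇(p ∧ □p)) → [p ∧ □p](p ∧ □p) is not valid on KD45. -/
theorem p_and_box_p_not_believable_true_lie :
    (∃ (S : Type) (M : Model Unit S) (s : S), isKD45 M ∧
      Sat M (Form.conj (Form.conj (Form.neg pAndBoxP) (Form.dia () pAndBoxP))
        (Form.ann pAndBoxP (Form.neg pAndBoxP))) s) ∧
    ¬ (∀ (S : Type) (M : Model Unit S) (s : S), isKD45 M →
      Sat M (Form.imp (Form.conj (Form.neg pAndBoxP) (Form.dia () pAndBoxP))
        (Form.ann pAndBoxP pAndBoxP)) s) := by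
  exact ⟨⟨Bool, believeTrue, false, isKD45_believeTrue, sat_believeTrue_false⟩,
    fun h => sat_conj_ann_neg_iff_not_sat_imp_ann.mp sat_believeTrue_false
      (h _ _ _ isKD45_believeTrue)⟩
end
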